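/- Let U, U* ∈ ℝ^{n×r} both have orthonormal columns, and let O* := argmin_{O ∈ O(r)} ‖U − U*O‖_F. If d := ‖U − U*O*‖_F, then ‖U^⊤(U O*^⊤ − U*)‖_F ≤ d², i.e., the Frobenius norm of U^⊤Δ, where Δ = U O*^⊤ − U*, is at most d². -/

import Mathlib

open Matrix

/-- Frobenius norm of a matrix. -/
noncomputable def frob {m n : ℕ} (A : Matrix (Fin m) (Fin n) ℝ) : ℝ :=
  Real.sqrt (∑ i, ∑ j, A i j ^ 2)

section aux

lemma sum_sq_eq_trace {m n : ℕ} (A : Matrix (Fin m) (Fin n) ℝ) :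
    ∑ i, ∑ j, A i j ^ 2 = trace (Aᵀ * A) := by
  unfold Matrix.trace
  simp only [Matrix.diag, Matrix.mul_apply, Matrix.transpose_apply, sq]
  exact Finset.sum_comm

lemma trace_nonneg_sq {m n : ℕ} (A : Matrix (Fin m) (Fin n) ℝ) :
    0 ≤ trace (Aᵀ * A) := by
  rw [← sum_sq_eq_trace]; positivity

lemma frob_eq {m n : ℕ} (A : Matrix (Fin m) (Fin n) ℝ) :
    frob A = Real.sqrt (trace (Aᵀ * A)) := by
  rw [frob, sum_sq_eq_trace]

lemma frob_sq {m n : ℕ} (A : Matrix (Fin m) (Fin n) ℝ) :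
    frob A ^ 2 = trace (Aᵀ * A) := by
  rw [frob_eq, Real.sq_sqrt (trace_nonneg_sq A)]

lemma frob_nonneg {m n : ℕ} (A : Matrix (Fin m) (Fin n) ℝ) : 0 ≤ frob A :=
  Real.sqrt_nonneg _

lemma frob_mul_orth {m r : ℕ} (A : Matrix (Fin m) (Fin r) ℝ)
    (O : Matrix (Fin r) (Fin r) ℝ) (hO : Oᵀ * O = 1) :
    frob (A * O) = frob A := by
  have hO' : O * Oᵀ = 1 := mul_eq_one_comm.mp hO
  rw [frob_eq, frob_eq]
  congr 1
  rw [Matrix.transpose_mul, Matrix.trace_mul_comm, Matrix.mul_assoc,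
    ← Matrix.mul_assoc O Oᵀ, hO', Matrix.one_mul, Matrix.trace_mul_comm]

lemma stdBasis_transpose {r : ℕ} (i j : Fin r) (c : ℝ) :
    (Matrix.single i j c)ᵀ = Matrix.single j i c := by
  ext k l
  simp only [Matrix.transpose_apply, Matrix.single, Matrix.of_apply]
  by_cases h1 : j = k <;> by_cases h2 : i = l <;> simp [h1, h2, and_comm]

noncomputable def rotQ {r : ℕ} (i j : Fin r) (c s : ℝ) : Matrix (Fin r) (Fin r) ℝ :=
  1 + (c - 1) • (Matrix.single i i (1:ℝ) + Matrix.single j j 1)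
    + s • Matrix.single i j (1:ℝ) - s • Matrix.single j i 1

lemma rotQ_orth {r : ℕ} (i j : Fin r) (hij : i ≠ j) (c s : ℝ) (hcs : c^2 + s^2 = 1) :
    (rotQ i j c s)ᵀ * rotQ i j c s = 1 := by
  unfold rotQ
  simp only [Matrix.transpose_add, Matrix.transpose_sub, Matrix.transpose_smul,
    Matrix.transpose_one, stdBasis_transpose]
  simp only [Matrix.add_mul, Matrix.mul_add, Matrix.sub_mul, Matrix.mul_sub,
    Matrix.smul_mul, Matrix.mul_smul, Matrix.one_mul, Matrix.mul_one, smul_add, smul_sub,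
    Matrix.single_mul_single_same,
    Matrix.single_mul_single_of_ne _ _ _ _ hij,
    Matrix.single_mul_single_of_ne _ _ _ _ hij.symm,
    mul_one, one_mul, smul_zero, add_zero, zero_add, sub_zero, smul_smul]
  match_scalars <;> nlinarith [hcs]

lemma trace_mul_stdBasis {r : ℕ} (M : Matrix (Fin r) (Fin r) ℝ) (a b : Fin r) :
    trace (M * Matrix.single a b (1:ℝ)) = M b a := by
  simp [Matrix.trace, Matrix.diag, Matrix.mul_apply, Matrix.single,
    ite_and, Finset.sum_ite_eq, Finset.sum_ite_eq']

lemma dot_transpose_mulVec {m k : ℕ} (M : Matrix (Fin m) (Fin k) ℝ)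
    (v : Fin k → ℝ) (u : Fin m → ℝ) :
    v ⬝ᵥ (Mᵀ *ᵥ u) = (M *ᵥ v) ⬝ᵥ u := by
  rw [Matrix.dotProduct_mulVec, Matrix.vecMul_transpose]

lemma mulVec_self_dot {m k : ℕ} (M : Matrix (Fin m) (Fin k) ℝ)
    (hM : Mᵀ * M = 1) (v : Fin k → ℝ) :
    (M *ᵥ v) ⬝ᵥ (M *ᵥ v) = v ⬝ᵥ v := by
  rw [← dot_transpose_mulVec, Matrix.mulVec_mulVec, hM, Matrix.one_mulVec]

end aux

/-- If `O*` minimizes `‖U − U*O‖_F` over orthogonal `O` and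
`d = ‖U − U*O*‖_F`, then `‖Uᵀ(U O*ᵀ − U*)‖_F ≤ d²`. -/
theorem stmt9 {n r : ℕ} (U Ustar : Matrix (Fin n) (Fin r) ℝ)
    (hU : Uᵀ * U = 1) (hUs : Ustarᵀ * Ustar = 1)
    (Ostar : Matrix (Fin r) (Fin r) ℝ) (hO : Ostarᵀ * Ostar = 1)
    (hmin : ∀ O : Matrix (Fin r) (Fin r) ℝ, Oᵀ * O = 1 →
      frob (U - Ustar * Ostar) ≤ frob (U - Ustar * O))
    (d : ℝ) (hd : d = frob (U - Ustar * Ostar)) :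
    frob (Uᵀ * (U * Ostarᵀ - Ustar)) ≤ d ^ 2 := by
  set B := Uᵀ * Ustar with hB
  set H := B * Ostar with hH
  set A := (1 : Matrix (Fin r) (Fin r) ℝ) - H with hA
  -- expansion of the squared distance for any orthogonal O
  have tr_expand : ∀ O : Matrix (Fin r) (Fin r) ℝ, Oᵀ * O = 1 →
      frob (U - Ustar * O) ^ 2 = 2 * (r : ℝ) - 2 * trace (B * O) := by
    intro O hOrth
    have e1 : Uᵀ * (Ustar * O) = B * O := by rw [hB, Matrix.mul_assoc]
    have e2 : (Ustar * O)ᵀ * U = (B * O)ᵀ := by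
      rw [← e1, Matrix.transpose_mul Uᵀ (Ustar * O), Matrix.transpose_transpose]
    have e3 : (Ustar * O)ᵀ * (Ustar * O) = 1 := by
      rw [Matrix.transpose_mul, Matrix.mul_assoc, ← Matrix.mul_assoc Ustarᵀ, hUs,
        Matrix.one_mul, hOrth]
    have key : (U - Ustar * O)ᵀ * (U - Ustar * O) = 1 - B * O - (B * O)ᵀ + 1 := by
      rw [Matrix.transpose_sub, Matrix.sub_mul, Matrix.mul_sub, Matrix.mul_sub,
        hU, e1, e2, e3]
      abel
    rw [frob_sq, key]
    rw [Matrix.trace_add, Matrix.trace_sub, Matrix.trace_sub, Matrix.trace_transpose,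
      Matrix.trace_one]
    simp
    ring
  -- d^2 = 2 * trace A
  have htrA : trace A = (r : ℝ) - trace H := by
    rw [hA, Matrix.trace_sub, Matrix.trace_one]; simp
  have hdsq : d ^ 2 = 2 * trace A := by
    rw [hd, tr_expand Ostar hO, htrA, ← hH]; ring
  -- minimality in trace form
  have hminT : ∀ Q : Matrix (Fin r) (Fin r) ℝ, Qᵀ * Q = 1 → trace (H * Q) ≤ trace H := by
    intro Q hQ
    have hOQ : (Ostar * Q)ᵀ * (Ostar * Q) = 1 := by
      rw [Matrix.transpose_mul, Matrix.mul_assoc, ← Matrix.mul_assoc Ostarᵀ, hO,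
        Matrix.one_mul, hQ]
    have h1 := hmin (Ostar * Q) hOQ
    have h2 : frob (U - Ustar * Ostar) ^ 2 ≤ frob (U - Ustar * (Ostar * Q)) ^ 2 :=
      pow_le_pow_left₀ (frob_nonneg _) h1 2
    rw [tr_expand Ostar hO, tr_expand (Ostar * Q) hOQ, ← Matrix.mul_assoc, ← hH] at h2
    linarith
  -- symmetry of H
  have hsym : ∀ i j, H i j = H j i := by
    intro i j
    by_cases hij : i = j
    · rw [hij]
    · set a := H i i + H j j with ha
      set b := H j i - H i j with hb
      have hconstr : ∀ c s : ℝ, c^2 + s^2 = 1 → (c - 1) * a + s * b ≤ 0 := by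
        intro c s hcs
        have h := hminT (rotQ i j c s) (rotQ_orth i j hij c s hcs)
        rw [rotQ] at h
        simp only [Matrix.mul_add, Matrix.mul_sub, Matrix.mul_one, Matrix.mul_smul,
          Matrix.trace_add, Matrix.trace_sub, Matrix.trace_smul, trace_mul_stdBasis,
          smul_eq_mul] at h
        rw [ha, hb]
        linarith
      have hb0 : b = 0 := by
        by_cases habz : a^2 + b^2 = 0
        · have : b^2 = 0 := by nlinarith [sq_nonneg a, sq_nonneg b]
          exact pow_eq_zero_iff (by norm_num) |>.mp this
        · set N := Real.sqrt (a^2 + b^2) with hN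
          have hNpos : 0 < N := Real.sqrt_pos.mpr (lt_of_le_of_ne (by positivity) (Ne.symm habz))
          have hNsq : N^2 = a^2 + b^2 := Real.sq_sqrt (by positivity)
          have hcs : (a/N)^2 + (b/N)^2 = 1 := by
            field_simp
            linarith [hNsq]
          have h := hconstr (a/N) (b/N) hcs
          have hval : (a/N - 1) * a + (b/N) * b = N - a := by
            field_simp
            nlinarith [hNsq]
          rw [hval] at h
          have hNa : N ≤ a := by linarith
          have : b^2 ≤ 0 := by nlinarith
          have : b^2 = 0 := le_antisymm this (sq_nonneg b)
          exact pow_eq_zero_iff (by norm_num) |>.mp this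
      have := hb0
      rw [hb] at this
      linarith
  -- quadratic form bound : v ⬝ᵥ H v ≤ v ⬝ᵥ v
  have hquad : ∀ v : Fin r → ℝ, v ⬝ᵥ (H *ᵥ v) ≤ v ⬝ᵥ v := by
    intro v
    have hHv : H *ᵥ v = Uᵀ *ᵥ (Ustar *ᵥ (Ostar *ᵥ v)) := by
      rw [Matrix.mulVec_mulVec, Matrix.mulVec_mulVec, hH, hB, Matrix.mul_assoc]
    set x := U *ᵥ v with hx
    set y := Ustar *ᵥ (Ostar *ᵥ v) with hy
    have hdot : v ⬝ᵥ (H *ᵥ v) = x ⬝ᵥ y := by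
      rw [hHv, dot_transpose_mulVec]
    have hxx : x ⬝ᵥ x = v ⬝ᵥ v := mulVec_self_dot U hU v
    have hyy : y ⬝ᵥ y = v ⬝ᵥ v := by
      rw [hy, mulVec_self_dot Ustar hUs, mulVec_self_dot Ostar hO]
    have hcs : (x ⬝ᵥ y)^2 ≤ (x ⬝ᵥ x) * (y ⬝ᵥ y) := by
      simpa [dotProduct, sq] using
        Finset.sum_mul_sq_le_sq_mul_sq Finset.univ x y
    have hvv : 0 ≤ v ⬝ᵥ v := by
      simp only [dotProduct]
      exact Finset.sum_nonneg fun i _ => mul_self_nonneg _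
    rw [hxx, hyy] at hcs
    rw [hdot]
    nlinarith [hcs, hvv]
  -- nonnegativity of A's quadratic form
  have hAquad : ∀ v : Fin r → ℝ, 0 ≤ v ⬝ᵥ (A *ᵥ v) := by
    intro v
    rw [hA, Matrix.sub_mulVec, Matrix.one_mulVec, dotProduct_sub]
    linarith [hquad v]
  have hAsym : ∀ i j, A i j = A j i := by
    intro i j
    simp only [hA, Matrix.sub_apply, Matrix.one_apply]
    rw [hsym i j]
    by_cases hij : i = j <;> simp [hij, eq_comm]
  -- diagonal entries nonneg
  have hAdiag : ∀ i, 0 ≤ A i i := by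
    intro i
    have := hAquad (Pi.single i 1)
    simpa [single_dotProduct, Matrix.mulVec_single] using this
  -- 2x2 minors
  have hAoff : ∀ i j, A i j ^ 2 ≤ A i i * A j j := by
    intro i j
    have hq : ∀ t : ℝ, 0 ≤ A i i * (t * t) + (2 * A i j) * t + A j j := by
      intro t
      have h := hAquad (t • (Pi.single i 1 : Fin r → ℝ) + Pi.single j 1)
      simp only [Matrix.mulVec_add, Matrix.mulVec_smul, add_dotProduct,
        smul_dotProduct, dotProduct_add, dotProduct_smul,
        Matrix.mulVec_single_one, Matrix.col_apply, single_dotProduct, dotProduct_single,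
        smul_eq_mul, mul_one, one_mul] at h
      have hs := hAsym i j
      rw [hs] at h ⊢
      ring_nf at h ⊢
      linarith
    have hdisc := discrim_le_zero hq
    rw [discrim] at hdisc
    nlinarith [hdisc]
  -- sum bound
  have htrAform : trace A = ∑ i, A i i := by
    simp [Matrix.trace, Matrix.diag]
  have htrAnn : 0 ≤ trace A := by
    rw [htrAform]
    exact Finset.sum_nonneg fun i _ => hAdiag i
  have hsum : ∑ i, ∑ j, A i j ^ 2 ≤ (trace A) ^ 2 := by
    calc ∑ i, ∑ j, A i j ^ 2 ≤ ∑ i, ∑ j, A i i * A j j :=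
          Finset.sum_le_sum fun i _ => Finset.sum_le_sum fun j _ => hAoff i j
      _ = (∑ i, A i i) * (∑ j, A j j) := by
          rw [Finset.sum_mul_sum]
      _ = (trace A) ^ 2 := by rw [htrAform]; ring
  have hfrobA : frob A ≤ trace A := by
    rw [frob]
    calc Real.sqrt (∑ i, ∑ j, A i j ^ 2) ≤ Real.sqrt ((trace A) ^ 2) :=
          Real.sqrt_le_sqrt hsum
      _ = trace A := by rw [Real.sqrt_sq htrAnn]
  -- rewrite the LHS
  have hLHS : Uᵀ * (U * Ostarᵀ - Ustar) = Ostarᵀ - B := by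
    rw [Matrix.mul_sub, ← Matrix.mul_assoc, hU, Matrix.one_mul]
  have hmat : (Ostarᵀ - B) * Ostar = A := by
    rw [Matrix.sub_mul, hO, hA, hH]
  have hfrobLHS : frob (Uᵀ * (U * Ostarᵀ - Ustar)) = frob A := by
    rw [hLHS, ← frob_mul_orth (Ostarᵀ - B) Ostar hO, hmat]
  rw [hfrobLHS, hdsq]
  linarith
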